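/- Every graph obtained from K_6 by a 4-split of a vertex contains K_{3,3}+v as a minor. -/

import Mathlib

/-!
The two vertices `a`, `b` created by the split, two neighbours `p, q ∈ A` of `a` and two
neighbours `r, s ∈ B` of `b` span a `K₃,₃` with sides `{a, r, s}` and `{b, p, q}`, provided
`p, q, r, s` are distinct; this choice is possible because `|A|, |B| ≥ 3` and `|A ∪ B| ≥ 4`.
A fifth vertex `t ≠ v` of `K₆` is adjacent to `p, q, r, s` and serves as the extra vertex.
So `K₃,₃ + v` is even a subgraph of the split graph.
-/

/-- `K₃,₃ + v`: `K₃,₃` with parts `{0,1,2}`, `{3,4,5}`, plus a new vertex `6`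
adjacent to the 4-cycle `0,3,1,4`. -/
def K33v : SimpleGraph (Fin 7) :=
  SimpleGraph.fromEdgeSet
    {s(0,3), s(0,4), s(0,5), s(1,3), s(1,4), s(1,5), s(2,3), s(2,4), s(2,5),
     s(6,0), s(6,3), s(6,1), s(6,4)}

/-- A graph is 4-connected if it has at least 5 vertices and deleting any
set of at most 3 vertices leaves it connected. -/
def FourConnected {V : Type*} (G : SimpleGraph V) : Prop :=
  5 ≤ Nat.card V ∧
  ∀ S : Set V, S.Finite → S.ncard ≤ 3 → (G.induce Sᶜ).Connected

/-- `H` is a minor of `G`: there are nonempty, pairwise disjoint, connected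
branch sets in `G`, one for each vertex of `H`, with an edge of `G` between
the branch sets of every pair of adjacent vertices of `H`. -/
def IsMinor {α β : Type*} (H : SimpleGraph α) (G : SimpleGraph β) : Prop :=
  ∃ φ : α → Set β,
    (∀ x, (φ x).Nonempty) ∧
    (∀ x, (G.induce (φ x)).Connected) ∧
    (Pairwise fun x y => Disjoint (φ x) (φ y)) ∧
    ∀ x y, H.Adj x y → ∃ u ∈ φ x, ∃ w ∈ φ y, G.Adj u w

/-- The double wheel `DW n`: a cycle on `Fin n` plus two adjacent hubs
joined to all cycle vertices. -/
def DW (n : ℕ) : SimpleGraph (Fin n ⊕ Fin 2) :=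
  SimpleGraph.fromRel fun u v =>
    match u, v with
    | Sum.inl i, Sum.inl j => (i.val + 1) % n = j.val
    | Sum.inl _, Sum.inr _ => True
    | Sum.inr _, Sum.inl _ => True
    | Sum.inr _, Sum.inr _ => True

/-- The square of the `n`-cycle: `i ~ j` iff `i - j ≡ ±1, ±2 (mod n)`. -/
def CycleSq (n : ℕ) : SimpleGraph (ZMod n) :=
  SimpleGraph.fromRel fun i j => i - j = 1 ∨ i - j = 2

/-- `G'` is obtained from `G` by the 4-split of `v` with sets `A`, `B`:
`A ∪ B = N(v)`, `|A|,|B| ≥ 3`, and `G'` consists of a copy of `G - v`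
(via `f`) together with two new adjacent vertices `a`, `b` where `a` is
additionally adjacent exactly to `A` and `b` exactly to `B`. -/
def IsFourSplitOn {V W : Type*} (G : SimpleGraph V) (v : V) (A B : Set V)
    (G' : SimpleGraph W) : Prop :=
  A ∪ B = G.neighborSet v ∧ 3 ≤ A.ncard ∧ 3 ≤ B.ncard ∧
  ∃ (f : {u : V // u ≠ v} → W) (a b : W),
    Function.Injective f ∧ a ≠ b ∧
    (∀ u, f u ≠ a) ∧ (∀ u, f u ≠ b) ∧
    (∀ w : W, w = a ∨ w = b ∨ ∃ u, f u = w) ∧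
    G'.Adj a b ∧
    (∀ u u' : {u : V // u ≠ v}, G'.Adj (f u) (f u') ↔ G.Adj u.1 u'.1) ∧
    (∀ u : {u : V // u ≠ v}, G'.Adj a (f u) ↔ u.1 ∈ A) ∧
    (∀ u : {u : V // u ≠ v}, G'.Adj b (f u) ↔ u.1 ∈ B)

/-- `G'` is obtained from `G` by a 4-split of the vertex `v`. -/
def IsFourSplit {V W : Type*} (G : SimpleGraph V) (v : V)
    (G' : SimpleGraph W) : Prop :=
  ∃ A B : Set V, IsFourSplitOn G v A B G'

/-- The graph `Γ₁`: vertices `v₁,…,v₅ = 0,…,4`, `a = 5`, `b = 6`;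
4-cycle `v₁v₂v₃v₄`, `v₅` adjacent to `v₁,v₂,v₃,v₄`, `a` adjacent to
`v₁,v₃,v₅,b`, and `b` adjacent to `v₂,v₃,v₄,a`. -/
def Gamma1 : SimpleGraph (Fin 7) :=
  SimpleGraph.fromEdgeSet
    {s(0,1), s(1,2), s(2,3), s(3,0),
     s(4,0), s(4,1), s(4,2), s(4,3),
     s(5,0), s(5,2), s(5,4), s(5,6),
     s(6,1), s(6,2), s(6,3)}

open SimpleGraph

theorem SimpleGraph.IsContained.isMinor {α β : Type*} {H : SimpleGraph α} {G : SimpleGraph β}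
    (h : H ⊑ G) : IsMinor H G := by
  obtain ⟨φ⟩ := h
  refine ⟨fun x => {φ x}, fun x => Set.singleton_nonempty _, fun x => ?_, ?_, ?_⟩
  · exact (connected_iff _).2 ⟨.of_subsingleton, inferInstance⟩
  · exact fun x y hxy => Set.disjoint_singleton.2 (φ.injective.ne hxy)
  · exact fun x y hxy => ⟨φ x, rfl, φ y, rfl, φ.toHom.map_adj hxy⟩

theorem Set.exists_two_mem_two_mem_nodup {α : Type*} {A B : Set α} (hA : 3 ≤ A.ncard)
    (hB : 3 ≤ B.ncard) (hAB : 4 ≤ (A ∪ B).ncard) :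
    ∃ p ∈ A, ∃ q ∈ A, ∃ r ∈ B, ∃ s ∈ B, [p, q, r, s].Nodup := by
  have hBfin : B.Finite := Set.finite_of_ncard_pos (by omega)
  suffices ∃ p ∈ A, ∃ q ∈ A, p ≠ q ∧ 2 ≤ (B \ {p, q}).ncard by
    obtain ⟨p, hp, q, hq, hpq, hB2⟩ := this
    obtain ⟨r, hr, s, hs, hrs⟩ := (Set.one_lt_ncard hBfin.sdiff).1 hB2
    simp only [Set.mem_sdiff, Set.mem_insert_iff, Set.mem_singleton_iff, not_or] at hr hs
    refine ⟨p, hp, q, hq, r, hr.1, s, hs.1, ?_⟩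
    simp only [List.nodup_cons, List.mem_cons, List.not_mem_nil, List.nodup_nil]
    grind
  by_cases hAsub : A ⊆ B
  · obtain ⟨p, hp, q, hq, hpq⟩ := (Set.one_lt_ncard (Set.finite_of_ncard_pos (by omega))).1
      (by omega : 1 < A.ncard)
    refine ⟨p, hp, q, hq, hpq, ?_⟩
    rw [Set.union_eq_self_of_subset_left hAsub] at hAB
    have := Set.le_ncard_sdiff {p, q} B
    rw [Set.ncard_pair hpq] at this
    omega
  · obtain ⟨p, hp, hpB⟩ := Set.not_subset.1 hAsub
    obtain ⟨q, hq, hqp⟩ := Set.exists_ne_of_one_lt_ncard (by omega : 1 < A.ncard) p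
    refine ⟨p, hp, q, hq, hqp.symm, ?_⟩
    have hsdiff : B \ {p, q} = B \ {q} := by
      ext u; simp only [Set.mem_sdiff, Set.mem_insert_iff, Set.mem_singleton_iff]
      grind
    have := Set.pred_ncard_le_ncard_sdiff_singleton B q
    rw [hsdiff]
    omega

theorem Set.exists_two_mem_two_mem_mem_union_nodup {α : Type*} {A B : Set α}
    (hA : 3 ≤ A.ncard) (hB : 3 ≤ B.ncard) (hAB : 5 ≤ (A ∪ B).ncard) :
    ∃ p ∈ A, ∃ q ∈ A, ∃ r ∈ B, ∃ s ∈ B, ∃ t ∈ A ∪ B, [p, q, r, s, t].Nodup := by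
  classical
  obtain ⟨p, hp, q, hq, r, hr, s, hs, hpqrs⟩ := Set.exists_two_mem_two_mem_nodup hA hB (by omega)
  obtain ⟨t, ht, htpqrs⟩ := Set.exists_mem_notMem_of_ncard_lt_ncard
    (s := ([p, q, r, s].toFinset : Set α)) (t := A ∪ B)
    (by rw [Set.ncard_coe_finset]; exact (List.toFinset_card_le _).trans_lt hAB)
  exact ⟨p, hp, q, hq, r, hr, s, hs, t, ht, hpqrs.concat (by simpa using htpqrs)⟩

theorem SimpleGraph.IsFourSplitOn.top_K33v_isContained {V W : Type*} [Finite V]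
    (hV : 6 ≤ Nat.card V) {v : V} {A B : Set V} {G' : SimpleGraph W}
    (h : IsFourSplitOn ⊤ v A B G') : K33v ⊑ G' := by
  obtain ⟨hAB, hA, hB, f, a, b, hf, hab, hfa, hfb, -, hGab, hff, haf, hbf⟩ := h
  rw [neighborSet_top] at hAB
  obtain ⟨p, hp, q, hq, r, hr, s, hs, t, ht, hnd⟩ :=
    Set.exists_two_mem_two_mem_mem_union_nodup hA hB
      (by rw [hAB, Set.ncard_compl, Set.ncard_singleton]; omega)
  simp only [List.nodup_cons, List.mem_cons, List.not_mem_nil, List.nodup_nil, or_false,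
    not_or, not_false_eq_true, and_true] at hnd
  obtain ⟨⟨hpq, hpr, hps, hpt⟩, ⟨hqr, hqs, hqt⟩, ⟨hrs, hrt⟩, hst⟩ := hnd
  have hv : ∀ u ∈ A ∪ B, u ≠ v := by rw [hAB]; exact fun u hu => hu
  set P : {u // u ≠ v} := ⟨p, hv p (.inl hp)⟩
  set Q : {u // u ≠ v} := ⟨q, hv q (.inl hq)⟩
  set R : {u // u ≠ v} := ⟨r, hv r (.inr hr)⟩
  set S : {u // u ≠ v} := ⟨s, hv s (.inr hs)⟩
  set T : {u // u ≠ v} := ⟨t, hv t ht⟩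
  let x : Fin 7 → W := ![f R, f S, a, f P, f Q, b, f T]
  have hx : Function.Injective x := by
    rw [← List.nodup_ofFn]
    simp [x, List.ofFn_succ, hf.eq_iff, hfa, hfb, hab, Ne.symm (hfa _), Ne.symm (hfb _), P, Q, R,
      S, T, hpq, hrs, hrt, hst, hpt, hqt, Ne.symm hpr, Ne.symm hps, Ne.symm hqr, Ne.symm hqs]
  have hF : ∀ u u' : {u // u ≠ v}, u.1 ≠ u'.1 → G'.Adj (f u) (f u') :=
    fun u u' h => (hff u u').2 h
  have hK : K33v ≤ G'.comap x := by
    simp only [K33v, fromEdgeSet_le, Set.sdiff_subset_iff, Set.insert_subset_iff, Set.mem_union,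
      Sym2.mem_diagSet, Sym2.mk_isDiag_iff, Fin.reduceEq, mem_edgeSet, comap_adj,
      Matrix.cons_val_zero, Matrix.cons_val, false_or, Matrix.cons_val_one,
      Set.singleton_subset_iff, Fin.isValue, x]
    exact ⟨hF R P (Ne.symm hpr), hF R Q (Ne.symm hqr), ((hbf R).2 hr).symm, hF S P (Ne.symm hps),
      hF S Q (Ne.symm hqs), ((hbf S).2 hs).symm, (haf P).2 hp, (haf Q).2 hq, hGab,
      hF T R (Ne.symm hrt), hF T P (Ne.symm hpt), hF T S (Ne.symm hst), hF T Q (Ne.symm hqt)⟩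
  exact (Hom.toCopy ⟨x, fun h => hK h⟩ hx).isContained

/-- Every graph obtained from `K₆` by a 4-split of a vertex contains
`K₃,₃ + v` as a minor. -/
theorem stmt_16 {W : Type*} (G' : SimpleGraph W) (v : Fin 6)
    (h : IsFourSplit (⊤ : SimpleGraph (Fin 6)) v G') : IsMinor K33v G' := by
  obtain ⟨A, B, hsplit⟩ := h
  exact (hsplit.top_K33v_isContained (by simp)).isMinor
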